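/- Let 0 < ν < π, let α > 0, β > α, C₀ > 0, and let k be a positive integer. Suppose ψ is holomorphic on the open sector S⁰_ν and satisfies |ψ(z)| ≤ C₀ |z|^α / (1 + |z|^β) for all z ∈ S⁰_ν. Then for every 0 < ω < ν there exists a constant C > 0 such that the k-th derivative ψ^{(k)} satisfies |ψ^{(k)}(z)| ≤ C · (1/|z|^k) · |z|^α / (1 + |z|^β) for all z ∈ S⁰_ω. -/

import Mathlib

open Complex

/-- The open sector `S⁰_ν = {z ≠ 0 : |arg z| < ν}` in the complex plane. -/
def sector (ν : ℝ) : Set ℂ := {z | z ≠ 0 ∧ |Complex.arg z| < ν}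

/-! For `z ∈ S⁰_ω` the disc of radius `δ |z|`, `δ = sin((ν - ω)/2) / 2`, lies in `S⁰_ν`, and on it
`|w|` is comparable to `|z|`, so the bound on `ψ` there is a constant times
`|z|^α / (1 + |z|^β)`. Cauchy's estimate on that disc divides this by `(δ |z|)^k`. -/

open Metric

lemma sector_subset_slitPlane {ν : ℝ} (hν : ν ≤ Real.pi) : sector ν ⊆ slitPlane :=
  fun _ ⟨hz0, hzarg⟩ ↦ mem_slitPlane_iff_arg.mpr
    ⟨fun h ↦ by rw [h, abs_of_pos Real.pi_pos] at hzarg; linarith, hz0⟩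

lemma isOpen_sector {ν : ℝ} (hν : ν ≤ Real.pi) : IsOpen (sector ν) := by
  have hsector : sector ν = slitPlane ∩ arg ⁻¹' Set.Ioo (-ν) ν := by
    ext z
    simp only [Set.mem_inter_iff, Set.mem_preimage, Set.mem_Ioo, ← abs_lt]
    exact ⟨fun hz ↦ ⟨sector_subset_slitPlane hν hz, hz.2⟩,
      fun ⟨hz, harg⟩ ↦ ⟨slitPlane_ne_zero hz, harg⟩⟩
  rw [hsector]
  exact continuousOn_arg.isOpen_inter_preimage isOpen_slitPlane isOpen_Ioo

lemma abs_arg_le_of_norm_sub_one_le {u : ℂ} {m : ℝ} (hm0 : 0 ≤ m) (hm : m ≤ Real.pi / 2)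
    (hu : ‖u - 1‖ ≤ Real.sin m / 2) : |arg u| ≤ m := by
  have hsin_le : Real.sin m ≤ 1 := Real.sin_le_one m
  have hre : 1 / 2 ≤ u.re := by
    have := (abs_le.mp ((abs_re_le_norm (u - 1)).trans hu)).1
    simp only [sub_re, one_re] at this
    linarith
  have him : |u.im| ≤ Real.sin m / 2 := by
    simpa using (abs_im_le_norm (u - 1)).trans hu
  have hnorm : 1 / 2 ≤ ‖u‖ := hre.trans (re_le_norm u)
  have hratio : |u.im / ‖u‖| ≤ Real.sin m := by
    rw [abs_div, abs_norm, div_le_iff₀ (by linarith)]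
    nlinarith [Real.sin_nonneg_of_nonneg_of_le_pi hm0 (by linarith [Real.pi_pos])]
  have hm_mem : m ∈ Set.Icc (-(Real.pi / 2)) (Real.pi / 2) := ⟨by linarith [Real.pi_pos], hm⟩
  obtain ⟨hlo, hhi⟩ := abs_le.mp hratio
  rw [arg_of_re_nonneg (by linarith), abs_le]
  constructor
  · calc -m = Real.arcsin (-Real.sin m) := by rw [Real.arcsin_neg, Real.arcsin_sin' hm_mem]
      _ ≤ _ := Real.arcsin_le_arcsin hlo
  · calc _ ≤ Real.arcsin (Real.sin m) := Real.arcsin_le_arcsin hhi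
      _ = m := Real.arcsin_sin' hm_mem

lemma closedBall_subset_sector {ω ν : ℝ} (hων : ω < ν) (hν : ν ≤ Real.pi) {z : ℂ}
    (hz : z ∈ sector ω) :
    closedBall z (Real.sin ((ν - ω) / 2) / 2 * ‖z‖) ⊆ sector ν := by
  obtain ⟨hz0, hzarg⟩ := hz
  have hω : 0 < ω := (abs_nonneg _).trans_lt hzarg
  intro w hw
  rw [mem_closedBall, dist_eq_norm, ← div_le_iff₀ (norm_pos_iff.mpr hz0), ← norm_div,
    sub_div, div_self hz0] at hw
  have hu : |arg (w / z)| ≤ (ν - ω) / 2 :=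
    abs_arg_le_of_norm_sub_one_le (by linarith) (by linarith) hw
  have hw0 : w ≠ 0 := by
    rintro rfl
    norm_num at hw
    linarith [Real.sin_le_one ((ν - ω) / 2)]
  obtain ⟨hu_lo, hu_hi⟩ := abs_le.mp hu
  obtain ⟨hz_lo, hz_hi⟩ := abs_lt.mp hzarg
  have harg : arg w = arg (w / z) + arg z := by
    conv_lhs => rw [← div_mul_cancel₀ w hz0]
    exact arg_mul (div_ne_zero hw0 hz0) hz0 ⟨by linarith, by linarith⟩
  exact ⟨hw0, abs_lt.mpr ⟨by linarith, by linarith⟩⟩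

lemma rpow_div_one_add_rpow_le {α β a b r s : ℝ} (hα : 0 ≤ α) (hβ : 0 ≤ β)
    (hb : 0 < b) (hb1 : b ≤ 1) (hs : 0 < s) (hr_le : r ≤ a * s) (hle_r : b * s ≤ r) :
    r ^ α / (1 + r ^ β) ≤ a ^ α / b ^ β * (s ^ α / (1 + s ^ β)) := by
  have hr : 0 ≤ r := (mul_pos hb hs).le.trans hle_r
  have ha : 0 ≤ a := nonneg_of_mul_nonneg_left (hr.trans hr_le) hs
  have hnum : r ^ α ≤ a ^ α * s ^ α := by
    rw [← Real.mul_rpow ha hs.le]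
    exact Real.rpow_le_rpow hr hr_le hα
  have hden : b ^ β * (1 + s ^ β) ≤ 1 + r ^ β := by
    have h1 : b ^ β * s ^ β ≤ r ^ β := by
      rw [← Real.mul_rpow hb.le hs.le]
      exact Real.rpow_le_rpow (by positivity) hle_r hβ
    have h2 : b ^ β ≤ 1 := Real.rpow_le_one hb.le hb1 hβ
    linarith
  rw [div_mul_div_comm]
  exact div_le_div₀ (by positivity) hnum (by positivity) hden

theorem stmt_0 (ν α β C₀ : ℝ) (hνπ : ν < Real.pi)
    (hα : 0 < α) (hβ : α < β) (hC₀ : 0 < C₀) (k : ℕ)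
    (ψ : ℂ → ℂ) (hψ : DifferentiableOn ℂ ψ (sector ν))
    (hbound : ∀ z ∈ sector ν, ‖ψ z‖ ≤ C₀ * ‖z‖ ^ α / (1 + ‖z‖ ^ β)) :
    ∀ ω, 0 < ω → ω < ν → ∃ C > 0, ∀ z ∈ sector ω,
      ‖iteratedDerivWithin k ψ (sector ν) z‖ ≤
        C * (1 / ‖z‖ ^ k) * (‖z‖ ^ α / (1 + ‖z‖ ^ β)) := by
  intro ω hω hων
  set δ := Real.sin ((ν - ω) / 2) / 2 with hδ
  have hδ0 : 0 < δ := half_pos (Real.sin_pos_of_pos_of_lt_pi (by linarith) (by linarith))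
  have hδ1 : δ < 1 := by linarith [Real.sin_le_one ((ν - ω) / 2), hδ]
  set K := (1 + δ) ^ α / (1 - δ) ^ β
  have hK : 0 < K := div_pos (by positivity) (Real.rpow_pos_of_pos (by linarith) β)
  refine ⟨k.factorial * (C₀ * K) / δ ^ k, by positivity, fun z hz ↦ ?_⟩
  have hz0 : 0 < ‖z‖ := norm_pos_iff.mpr hz.1
  have hball := closedBall_subset_sector hων hνπ.le hz
  have hsphere : ∀ w ∈ sphere z (δ * ‖z‖),
      ‖ψ w‖ ≤ C₀ * K * (‖z‖ ^ α / (1 + ‖z‖ ^ β)) := by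
    intro w hw
    obtain ⟨hw_lo, hw_hi⟩ :=
      abs_le.mp ((abs_norm_sub_norm_le w z).trans_eq (mem_sphere_iff_norm.mp hw))
    calc ‖ψ w‖ ≤ C₀ * (‖w‖ ^ α / (1 + ‖w‖ ^ β)) :=
          (hbound w (hball (sphere_subset_closedBall hw))).trans_eq (mul_div_assoc ..)
      _ ≤ C₀ * (K * (‖z‖ ^ α / (1 + ‖z‖ ^ β))) := by
          gcongr
          exact rpow_div_one_add_rpow_le hα.le (by linarith) (by linarith) (by linarith) hz0
            (by linarith) (by linarith)
      _ = _ := (mul_assoc ..).symm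
  rw [iteratedDerivWithin_of_isOpen (isOpen_sector hνπ.le) ⟨hz.1, hz.2.trans hων⟩]
  calc _ ≤ k.factorial * (C₀ * K * (‖z‖ ^ α / (1 + ‖z‖ ^ β))) / (δ * ‖z‖) ^ k :=
        norm_iteratedDeriv_le_of_forall_mem_sphere_norm_le k (by positivity)
          (hψ.diffContOnCl_ball hball) hsphere
    _ = _ := by
        field_simp
        ring
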